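/- arXiv:2006.06519 — 2 statements merged into one kernel-verified Lean document; each statement's English description precedes it below -/
import Mathlib

section
/- Consider the ε-bounded response model: F is a Borel probability measure on [0,1] (value distribution), β : [0,1] → [0,1] is a measurable base-bid function with β(v) ≤ v for all v, z : [0,1] → [0,ε] is measurable, and for a reserve r ∈ (0,1] the bid function is b_r(v) = β(v) if β(v) ≥ r; b_r(v) = r + z(v) if β(v) < r ≤ v; and b_r(v) = 0 if v < r. Define the bidding component E(r) = ∫ max(b_r(v) − r, 0) dF(v). Fix 0 < r⁻ < r⁺ ≤ 1, set δ = r⁺ − r⁻, and define the truncated bid Y(v) = max(b_{r⁻}(v) − r⁻, 0) if b_{r⁻}(v) ≤ r⁺ and Y(v) = δ otherwise. Let V₁,…,Vₙ be i.i.d. with law F and let Ĝ_E = −(Σᵢ₌₁ⁿ Y(Vᵢ))/(n·δ). Then the bias satisfies |E[Ĝ_E] − (E(r⁺) − E(r⁻))/δ| ≤ 2ε/δ, and Var(Ĝ_E) ≤ 1/(4n). -/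
open MeasureTheory ProbabilityTheory Set

/-!
The truncated bid is exactly the loss a *non-responsive* bidder would suffer: for `r⁻ ≤ r⁺`,
`max (x - r⁺) 0 - max (x - r⁻) 0 = -min (max (x - r⁻) 0) (r⁺ - r⁻)`. Applied to
`x = b_{r⁻}(v)`, the bias integrand becomes the gain at `r⁺` of the responding bid `b_{r⁺}(v)`
minus that of the old bid `b_{r⁻}(v)`. Both equal `β v - r⁺` when `β v ≥ r⁺`, and otherwise both
lie in `[0, ε]`, so the bias is at most `ε / δ`. For the variance, `Y` takes values in `[0, δ]`,
so each `Y (Vᵢ)` has variance at most `δ² / 4` (Popoviciu), and independence adds them up.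
-/

theorem max_sub_sub_max_sub_eq_neg_min {α : Type*} [AddCommGroup α] [LinearOrder α]
    [IsOrderedAddMonoid α] {a b : α} (hab : a ≤ b) (x : α) :
    max (x - b) 0 - max (x - a) 0 = -min (max (x - a) 0) (b - a) := by
  rcases le_total x a with h | h
  · simp [max_eq_right (sub_nonpos.2 h), max_eq_right (sub_nonpos.2 (h.trans hab)), hab]
  rcases le_total x b with h' | h'
  · simp [max_eq_left (sub_nonneg.2 h), h']
  · simp [max_eq_left (sub_nonneg.2 h), h']

theorem ite_le_eq_min_max_sub {α : Type*} [AddCommGroup α] [LinearOrder α]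
    [IsOrderedAddMonoid α] {a b : α} (hab : a ≤ b) (x : α) :
    (if x ≤ b then max (x - a) 0 else b - a) = min (max (x - a) 0) (b - a) := by
  split_ifs with h
  · exact (min_eq_left (max_le (sub_le_sub_right h a) (sub_nonneg.2 hab))).symm
  · exact (min_eq_right ((sub_le_sub_right (not_le.1 h).le a).trans (le_max_left _ _))).symm

section IidSums

variable {Ω ι α : Type*} [MeasurableSpace Ω] [MeasurableSpace α] [Fintype ι]
  {μ : Measure Ω} {V : ι → Ω → α} {f : α → ℝ}

theorem integral_sum_comp_eq_card_mul {F : Measure α} (hV : ∀ i, AEMeasurable (V i) μ)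
    (hlaw : ∀ i, μ.map (V i) = F) (hf : Integrable f F) :
    ∫ ω, ∑ i, f (V i ω) ∂μ = Fintype.card ι * ∫ x, f x ∂F := by
  have hfV : ∀ i, Integrable (fun ω => f (V i ω)) μ := fun i =>
    (hlaw i ▸ hf).comp_aemeasurable (hV i)
  have hint : ∀ i, ∫ ω, f (V i ω) ∂μ = ∫ x, f x ∂F := fun i => by
    rw [← hlaw i, integral_map (hV i) (hlaw i ▸ hf.aestronglyMeasurable)]
  rw [integral_finsetSum _ fun i _ => hfV i]
  simp [hint]

theorem variance_sum_comp_le [IsProbabilityMeasure μ] (hV : ∀ i, AEMeasurable (V i) μ)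
    (hindep : iIndepFun V μ) (hf : Measurable f) {a b : ℝ} (hfab : ∀ x, f x ∈ Icc a b) :
    variance (fun ω => ∑ i, f (V i ω)) μ ≤ Fintype.card ι * ((b - a) / 2) ^ 2 := by
  have hfV : ∀ i, AEMeasurable (fun ω => f (V i ω)) μ := fun i => hf.comp_aemeasurable (hV i)
  have hsum : variance (∑ i, fun ω => f (V i ω)) μ = ∑ i, variance (fun ω => f (V i ω)) μ :=
    IndepFun.variance_sum
      (fun i _ => memLp_of_bounded (.of_forall fun ω => hfab (V i ω)) (hfV i).aestronglyMeasurable 2)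
      fun i _ j _ hij => (hindep.indepFun hij).comp hf hf
  calc variance (fun ω => ∑ i, f (V i ω)) μ
      = ∑ i, variance (fun ω => f (V i ω)) μ := by rw [← hsum]; congr 1; ext; simp
    _ ≤ ∑ _i : ι, ((b - a) / 2) ^ 2 :=
        Finset.sum_le_sum fun i _ => variance_le_sq_of_bounded (.of_forall fun ω => hfab _) (hfV i)
    _ = Fintype.card ι * ((b - a) / 2) ^ 2 := by simp

variable [Nonempty ι]

theorem integral_neg_sum_div_card_mul {F : Measure α} (hV : ∀ i, AEMeasurable (V i) μ)
    (hlaw : ∀ i, μ.map (V i) = F) (hf : Integrable f F) (c : ℝ) :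
    ∫ ω, -(∑ i, f (V i ω)) / (Fintype.card ι * c) ∂μ = -(∫ x, f x ∂F) / c := by
  rw [integral_div, integral_neg, integral_sum_comp_eq_card_mul hV hlaw hf, ← mul_neg,
    mul_div_mul_left _ _ (Nat.cast_ne_zero.2 Fintype.card_ne_zero)]

theorem variance_neg_sum_div_card_mul_le [IsProbabilityMeasure μ]
    (hV : ∀ i, AEMeasurable (V i) μ) (hindep : iIndepFun V μ) (hf : Measurable f) {c : ℝ}
    (hc : c ≠ 0) (hfc : ∀ x, f x ∈ Icc 0 c) :
    variance (fun ω => -(∑ i, f (V i ω)) / (Fintype.card ι * c)) μ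
      ≤ 1 / (4 * Fintype.card ι) := by
  have hk : (Fintype.card ι : ℝ) ≠ 0 := Nat.cast_ne_zero.2 Fintype.card_ne_zero
  have hG : (fun ω => -(∑ i, f (V i ω)) / (Fintype.card ι * c))
      = fun ω => -(Fintype.card ι * c)⁻¹ * ∑ i, f (V i ω) := funext fun ω => by ring
  rw [hG, variance_const_mul]
  calc _ ≤ (-(Fintype.card ι * c)⁻¹) ^ 2 * (Fintype.card ι * ((c - 0) / 2) ^ 2) := by
        gcongr; exact variance_sum_comp_le hV hindep hf hfc
    _ = 1 / (4 * Fintype.card ι) := by field_simp; ring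

end IidSums

noncomputable def responseBid (β z : ℝ → ℝ) (r v : ℝ) : ℝ :=
  if r ≤ β v then β v else if r ≤ v then r + z v else 0

section ResponseBid

variable {β z : ℝ → ℝ} {ε r r' : ℝ}

theorem measurable_responseBid (hβ : Measurable β) (hz : Measurable z) (r : ℝ) :
    Measurable (responseBid β z r) :=
  Measurable.ite (measurableSet_le measurable_const hβ) hβ <|
    Measurable.ite (measurableSet_le measurable_const measurable_id) (hz.const_add r)
      measurable_const

theorem max_responseBid_sub_le {v : ℝ} (hβ : β v ≤ 1) (hz : z v ∈ Icc 0 ε) (hr : 0 ≤ r) :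
    max (responseBid β z r v - r) 0 ≤ 1 + ε := by
  obtain ⟨hz0, hzε⟩ := hz
  unfold responseBid
  split_ifs <;> apply max_le <;> linarith

theorem abs_max_responseBid_sub_le {v : ℝ} (hz : z v ∈ Icc 0 ε) (hr : r ≤ r') (hr' : 0 ≤ r') :
    |max (responseBid β z r' v - r') 0 - max (responseBid β z r v - r') 0| ≤ ε := by
  obtain ⟨hz0, hzε⟩ := hz
  unfold responseBid
  split_ifs <;> rw [abs_le] <;> constructor <;> simp only [max_def] <;> split_ifs <;> linarith

variable {F : Measure ℝ} [IsProbabilityMeasure F]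

theorem integrable_max_responseBid_sub (hβ : Measurable β) (hz : Measurable z)
    (hβ1 : ∀ᵐ v ∂F, β v ≤ 1) (hzε : ∀ᵐ v ∂F, z v ∈ Icc 0 ε) (hr : 0 ≤ r) :
    Integrable (fun v => max (responseBid β z r v - r) 0) F := by
  refine .of_bound (((measurable_responseBid hβ hz r).sub_const r).max measurable_const
    |>.aestronglyMeasurable) (1 + ε) ?_
  filter_upwards [hβ1, hzε] with v hβv hzv
  rw [Real.norm_of_nonneg (le_max_right _ _)]
  exact max_responseBid_sub_le hβv hzv hr

theorem abs_integral_max_responseBid_sub_add_min_le (hβ : Measurable β) (hz : Measurable z)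
    (hβ1 : ∀ᵐ v ∂F, β v ≤ 1) (hzε : ∀ᵐ v ∂F, z v ∈ Icc 0 ε) (hr : 0 ≤ r) (hrr' : r ≤ r') :
    |∫ v, max (responseBid β z r' v - r') 0 ∂F - ∫ v, max (responseBid β z r v - r) 0 ∂F
      + ∫ v, min (max (responseBid β z r v - r) 0) (r' - r) ∂F| ≤ ε := by
  have hint' := integrable_max_responseBid_sub hβ hz hβ1 hzε (hr.trans hrr')
  have hint := integrable_max_responseBid_sub hβ hz hβ1 hzε hr
  have htrunc : Integrable (fun v => min (max (responseBid β z r v - r) 0) (r' - r)) F :=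
    hint.inf (integrable_const _)
  rw [← integral_sub hint' hint, ← integral_add (by exact hint'.sub hint) htrunc]
  have hbound : ∀ᵐ v ∂F, ‖max (responseBid β z r' v - r') 0 - max (responseBid β z r v - r) 0
      + min (max (responseBid β z r v - r) 0) (r' - r)‖ ≤ ε := by
    filter_upwards [hzε] with v hzv
    have hclip := max_sub_sub_max_sub_eq_neg_min hrr' (responseBid β z r v)
    calc _ = |max (responseBid β z r' v - r') 0 - max (responseBid β z r v - r') 0| := by
          rw [Real.norm_eq_abs]; congr 1; linarith
      _ ≤ ε := abs_max_responseBid_sub_le hzv hrr' (hr.trans hrr')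
  simpa using norm_integral_le_of_norm_le_const hbound

end ResponseBid

theorem bid_truncation_eps_bounded_response_general
    {Ω : Type*} [MeasureSpace Ω] [IsProbabilityMeasure (ℙ : Measure Ω)]
    (F : Measure ℝ) [IsProbabilityMeasure F] (hF : F (Icc (0:ℝ) 1) = 1)
    (ε : ℝ) (hε : 0 ≤ ε)
    (β : ℝ → ℝ) (hβ_meas : Measurable β)
    (hβ_mem : ∀ v ∈ Icc (0:ℝ) 1, β v ∈ Icc (0:ℝ) 1)
    (z : ℝ → ℝ) (hz_meas : Measurable z)
    (hz : ∀ v ∈ Icc (0:ℝ) 1, z v ∈ Icc 0 ε)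
    (b : ℝ → ℝ → ℝ)
    (hb : ∀ r ∈ Ioc (0:ℝ) 1, ∀ v,
      b r v = if r ≤ β v then β v else if r ≤ v then r + z v else 0)
    (rm rp : ℝ) (hrm : 0 < rm) (hlt : rm < rp) (hrp : rp ≤ 1)
    (E : ℝ → ℝ) (hE : ∀ r, E r = ∫ v, max (b r v - r) 0 ∂F)
    (Y : ℝ → ℝ)
    (hY : ∀ v, Y v = if b rm v ≤ rp then max (b rm v - rm) 0 else rp - rm)
    (n : ℕ) (hn : 0 < n)
    (V : Fin n → Ω → ℝ) (hV : ∀ i, Measurable (V i))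
    (hindep : iIndepFun V ℙ)
    (hlaw : ∀ i, Measure.map (V i) ℙ = F)
    (G : Ω → ℝ) (hG : ∀ ω, G ω = -(∑ i : Fin n, Y (V i ω)) / (n * (rp - rm))) :
    |(∫ ω, G ω ∂ℙ) - (E rp - E rm) / (rp - rm)| ≤ 2 * ε / (rp - rm)
      ∧ variance G ℙ ≤ 1 / (4 * n) := by
  have hδ : 0 < rp - rm := sub_pos.2 hlt
  have hrm_mem : rm ∈ Ioc (0:ℝ) 1 := ⟨hrm, hlt.le.trans hrp⟩
  have hb_resp : ∀ r ∈ Ioc (0:ℝ) 1, b r = responseBid β z r := fun r hr => funext (hb r hr)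
  have hE_resp : ∀ r ∈ Ioc (0:ℝ) 1, E r = ∫ v, max (responseBid β z r v - r) 0 ∂F :=
    fun r hr => by rw [hE, hb_resp r hr]
  have hY_eq : Y = fun v => min (max (responseBid β z rm v - rm) 0) (rp - rm) := funext fun v => by
    rw [hY, hb_resp rm hrm_mem, ite_le_eq_min_max_sub hlt.le]
  have hY_mem : ∀ v, Y v ∈ Icc 0 (rp - rm) := fun v => by
    rw [hY_eq]; exact ⟨le_min (le_max_right _ _) hδ.le, min_le_right _ _⟩
  have hY_meas : Measurable Y := hY_eq ▸
    (((measurable_responseBid hβ_meas hz_meas rm).sub_const rm).max measurable_const).min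
      measurable_const
  have hY_int : Integrable Y F := .of_bound hY_meas.aestronglyMeasurable (rp - rm)
    (.of_forall fun v => by rw [Real.norm_of_nonneg (hY_mem v).1]; exact (hY_mem v).2)
  have hF_ae : ∀ᵐ v ∂F, v ∈ Icc (0:ℝ) 1 :=
    (ae_mem_iff_measure_eq measurableSet_Icc.nullMeasurableSet).2 (by rw [hF, measure_univ])
  have hbias : |E rp - E rm + ∫ v, Y v ∂F| ≤ ε := by
    rw [hE_resp rp ⟨hrm.trans hlt, hrp⟩, hE_resp rm hrm_mem, hY_eq]
    exact abs_integral_max_responseBid_sub_add_min_le hβ_meas hz_meas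
      (hF_ae.mono fun v hv => (hβ_mem v hv).2) (hF_ae.mono hz) hrm.le hlt.le
  have hG_eq : G = fun ω => -(∑ i, Y (V i ω)) / (n * (rp - rm)) := funext hG
  have hV_ae : ∀ i, AEMeasurable (V i) ℙ := fun i => (hV i).aemeasurable
  have : Nonempty (Fin n) := ⟨⟨0, hn⟩⟩
  have hEG : ∫ ω, G ω ∂ℙ = -(∫ v, Y v ∂F) / (rp - rm) := by
    simpa [hG_eq] using integral_neg_sum_div_card_mul hV_ae hlaw hY_int (rp - rm)
  constructor
  · calc |(∫ ω, G ω ∂ℙ) - (E rp - E rm) / (rp - rm)|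
        = |-(E rp - E rm + ∫ v, Y v ∂F) / (rp - rm)| := by rw [hEG]; ring_nf
      _ = |E rp - E rm + ∫ v, Y v ∂F| / (rp - rm) := by rw [abs_div, abs_neg, abs_of_pos hδ]
      _ ≤ 2 * ε / (rp - rm) := by gcongr; linarith
  · simpa [hG_eq] using variance_neg_sum_div_card_mul_le hV_ae hindep hY_meas hδ.ne' hY_mem

/-- Bias and variance of the bid-truncation gradient estimator for the bidding
component under the ε-bounded response model.  The bid function is
`b r v = β v` if `β v ≥ r`, `b r v = r + z v` if `β v < r ≤ v`, and `0` if
`v < r`, with base bid `β v ≤ v` and `z v ∈ [0,ε]`.  With `E r = ∫ max(b r v - r, 0) dF`,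
the truncated bid `Y v = max(b r⁻ v - r⁻, 0)` if `b r⁻ v ≤ r⁺` and `Y v = r⁺ - r⁻`
otherwise, and `Ĝ_E = -(∑ᵢ Y(Vᵢ))/(n·(r⁺-r⁻))` for `V₁,…,Vₙ` i.i.d. with law `F`,
the bias satisfies `|E[Ĝ_E] - (E(r⁺)-E(r⁻))/(r⁺-r⁻)| ≤ 2ε/(r⁺-r⁻)` and
`Var(Ĝ_E) ≤ 1/(4n)`. -/
theorem bid_truncation_eps_bounded_response
    {Ω : Type*} [MeasureSpace Ω] [IsProbabilityMeasure (ℙ : Measure Ω)]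
    (F : Measure ℝ) [IsProbabilityMeasure F] (hF : F (Icc (0:ℝ) 1) = 1)
    (ε : ℝ) (hε : 0 ≤ ε)
    (β : ℝ → ℝ) (hβ_meas : Measurable β)
    (hβ_mem : ∀ v ∈ Icc (0:ℝ) 1, β v ∈ Icc (0:ℝ) 1)
    (hβ_le : ∀ v ∈ Icc (0:ℝ) 1, β v ≤ v)
    (z : ℝ → ℝ) (hz_meas : Measurable z)
    (hz : ∀ v ∈ Icc (0:ℝ) 1, z v ∈ Icc 0 ε)
    (b : ℝ → ℝ → ℝ)
    (hb : ∀ r ∈ Ioc (0:ℝ) 1, ∀ v,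
      b r v = if r ≤ β v then β v else if r ≤ v then r + z v else 0)
    (rm rp : ℝ) (hrm : 0 < rm) (hlt : rm < rp) (hrp : rp ≤ 1)
    (E : ℝ → ℝ) (hE : ∀ r, E r = ∫ v, max (b r v - r) 0 ∂F)
    (Y : ℝ → ℝ)
    (hY : ∀ v, Y v = if b rm v ≤ rp then max (b rm v - rm) 0 else rp - rm)
    (n : ℕ) (hn : 0 < n)
    (V : Fin n → Ω → ℝ) (hV : ∀ i, Measurable (V i))
    (hindep : iIndepFun V ℙ)
    (hlaw : ∀ i, Measure.map (V i) ℙ = F)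
    (G : Ω → ℝ) (hG : ∀ ω, G ω = -(∑ i : Fin n, Y (V i ω)) / (n * (rp - rm))) :
    |(∫ ω, G ω ∂ℙ) - (E rp - E rm) / (rp - rm)| ≤ 2 * ε / (rp - rm)
      ∧ variance G ℙ ≤ 1 / (4 * n) :=
  bid_truncation_eps_bounded_response_general F hF ε hε β hβ_meas hβ_mem z hz_meas hz b hb rm rp hrm
    hlt hrp E hE Y hY n hn V hV hindep hlaw G hG
end

section
/- Let μ : ℝ → ℝ be differentiable with L-Lipschitz derivative, let C ⊆ ℝ be a nonempty closed convex set, r ∈ C, α > 0, and Ĝ ∈ ℝ. Let Π_C denote the metric projection onto C, set r′ = Π_C(r + α·Ĝ), and define the gradient mapping P_C(r, g, α) = (Π_C(r + α·g) − r)/α. Then α·(P_C(r, Ĝ, α))² ≤ 2·(μ(r′) − μ(r)) + α·(Ĝ − μ′(r))² + L·α²·Ĝ². -/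
/-!
The projection inequality `(r + αĜ - r')(r - r') ≤ 0` gives `d² ≤ αĜd` for `d = r' - r`,
hence `d² ≤ α²Ĝ²`. Since `μ + (L/2)x²` has monotone derivative it is convex, so it lies above
its tangent line at `r`; this is the descent bound `μ(r') - μ(r) ≥ μ'(r)d - (L/2)d²`.
Completing the square `(α(Ĝ - μ'(r)) - d)² ≥ 0` combines the two into the claim.
-/

open Set

theorem real_inner_sub_le_zero_of_forall_norm_sub_le {F : Type*} [NormedAddCommGroup F]
    [InnerProductSpace ℝ F] {K : Set F} (hK : Convex ℝ K) {u v : F} (hv : v ∈ K)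
    (hmin : ∀ w ∈ K, ‖u - v‖ ≤ ‖u - w‖) {w : F} (hw : w ∈ K) :
    inner ℝ (u - v) (w - v) ≤ 0 := by
  have : Nonempty K := ⟨⟨v, hv⟩⟩
  have hinf : ‖u - v‖ = ⨅ w : K, ‖u - w‖ :=
    le_antisymm (le_ciInf fun w => hmin w w.2)
      (ciInf_le ⟨0, forall_mem_range.2 fun _ => norm_nonneg _⟩ (⟨v, hv⟩ : K))
  exact (norm_eq_iInf_iff_real_inner_le_zero hK hv).1 hinf w hw

theorem ConvexOn.add_mul_sub_le_of_hasDerivAt {S : Set ℝ} {f : ℝ → ℝ} {x y f' : ℝ}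
    (hf : ConvexOn ℝ S f) (hx : x ∈ S) (hy : y ∈ S) (hd : HasDerivAt f f' x) :
    f x + f' * (y - x) ≤ f y := by
  rcases lt_trichotomy x y with hxy | rfl | hyx
  · have := hf.le_slope_of_hasDerivAt hx hy hxy hd
    rw [slope_def_field, le_div_iff₀ (sub_pos.2 hxy)] at this
    linarith
  · simp
  · have := hf.slope_le_of_hasDerivAt hy hx hyx hd
    rw [slope_def_field, div_le_iff₀ (sub_pos.2 hyx)] at this
    linarith

section LipschitzDeriv

variable {f f' : ℝ → ℝ} {L : ℝ}

theorem monotone_add_mul_of_abs_sub_le (hlip : ∀ x y, |f' x - f' y| ≤ L * |x - y|) :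
    Monotone fun x => f' x + L * x := by
  intro x y hxy
  have hxy' := hlip y x
  rw [abs_of_nonneg (sub_nonneg.2 hxy)] at hxy'
  have := neg_abs_le (f' y - f' x)
  dsimp only
  linarith

theorem HasDerivAt.add_half_mul_sq {x d : ℝ} (hd : HasDerivAt f d x) :
    HasDerivAt (fun x => f x + L / 2 * x ^ 2) (d + L * x) x :=
  (hd.add ((hasDerivAt_pow 2 x).const_mul (L / 2))).congr_deriv (by ring)

theorem convexOn_add_half_mul_sq_of_abs_sub_le (hderiv : ∀ x, HasDerivAt f (f' x) x)
    (hlip : ∀ x y, |f' x - f' y| ≤ L * |x - y|) :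
    ConvexOn ℝ univ fun x => f x + L / 2 * x ^ 2 := by
  have hd x := (hderiv x).add_half_mul_sq (L := L)
  refine Monotone.convexOn_univ_of_deriv (fun x => (hd x).differentiableAt) ?_
  rw [funext fun x => (hd x).deriv]
  exact monotone_add_mul_of_abs_sub_le hlip

theorem mul_sub_sub_le_sub_of_abs_sub_le (hderiv : ∀ x, HasDerivAt f (f' x) x)
    (hlip : ∀ x y, |f' x - f' y| ≤ L * |x - y|) (a b : ℝ) :
    f' a * (b - a) - L / 2 * (b - a) ^ 2 ≤ f b - f a := by
  have := (convexOn_add_half_mul_sq_of_abs_sub_le hderiv hlip).add_mul_sub_le_of_hasDerivAt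
    (mem_univ a) (mem_univ b) (hderiv a).add_half_mul_sq
  linarith

end LipschitzDeriv

theorem projected_gradient_ascent_bound_general
    (μ μ' : ℝ → ℝ) (L : ℝ)
    (hderiv : ∀ x, HasDerivAt μ (μ' x) x)
    (hlip : ∀ x y, |μ' x - μ' y| ≤ L * |x - y|)
    (C : Set ℝ) (hconv : Convex ℝ C)
    (proj : ℝ → ℝ)
    (hmem : ∀ x, proj x ∈ C)
    (hmin : ∀ x, ∀ y ∈ C, |x - proj x| ≤ |x - y|)
    (r : ℝ) (hr : r ∈ C) (α : ℝ) (hα : 0 < α) (G : ℝ)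
    (r' : ℝ) (hr' : r' = proj (r + α * G))
    (P : ℝ → ℝ) (hP : ∀ g, P g = (proj (r + α * g) - r) / α) :
    α * (P G) ^ 2 ≤ 2 * (μ r' - μ r) + α * (G - μ' r) ^ 2 + L * α ^ 2 * G ^ 2 := by
  have hL : 0 ≤ L := by simpa using (abs_nonneg _).trans (hlip 1 0)
  have hproj : (r + α * G - r') * (r - r') ≤ 0 := by
    have := real_inner_sub_le_zero_of_forall_norm_sub_le hconv (hmem (r + α * G))
      (by simpa only [Real.norm_eq_abs] using hmin (r + α * G)) hr
    rwa [← hr', real_inner_eq_re_inner ℝ, RCLike.inner_apply, mul_comm] at this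
  have hdesc := mul_sub_sub_le_sub_of_abs_sub_le hderiv hlip r r'
  have hstep : (r' - r) ^ 2 ≤ (α * G) ^ 2 := by nlinarith [sq_nonneg (α * G - (r' - r))]
  have hPG : α * P G ^ 2 = (r' - r) ^ 2 / α := by
    rw [hP, ← hr']
    field_simp
  rw [hPG, div_le_iff₀ hα]
  nlinarith [sq_nonneg (α * (G - μ' r) - (r' - r)), mul_le_mul_of_nonneg_left hstep hL]

/-- For `L`-smooth `μ`, a nonempty closed convex `C ⊆ ℝ`, `r ∈ C`, step size
`α > 0`, gradient estimate `Ĝ`, projected update `r' = Π_C(r + α·Ĝ)` and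
gradient mapping `P_C(r, g, α) = (Π_C(r + α·g) - r)/α`, we have
`α·(P_C(r, Ĝ, α))² ≤ 2·(μ(r') - μ(r)) + α·(Ĝ - μ'(r))² + L·α²·Ĝ²`. -/
theorem projected_gradient_ascent_bound
    (μ μ' : ℝ → ℝ) (L : ℝ)
    (hderiv : ∀ x, HasDerivAt μ (μ' x) x)
    (hlip : ∀ x y, |μ' x - μ' y| ≤ L * |x - y|)
    (C : Set ℝ) (hne : C.Nonempty) (hclosed : IsClosed C) (hconv : Convex ℝ C)
    (proj : ℝ → ℝ)
    (hmem : ∀ x, proj x ∈ C)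
    (hmin : ∀ x, ∀ y ∈ C, |x - proj x| ≤ |x - y|)
    (r : ℝ) (hr : r ∈ C) (α : ℝ) (hα : 0 < α) (G : ℝ)
    (r' : ℝ) (hr' : r' = proj (r + α * G))
    (P : ℝ → ℝ) (hP : ∀ g, P g = (proj (r + α * g) - r) / α) :
    α * (P G) ^ 2 ≤ 2 * (μ r' - μ r) + α * (G - μ' r) ^ 2 + L * α ^ 2 * G ^ 2 :=
  projected_gradient_ascent_bound_general μ μ' L hderiv hlip C hconv proj hmem hmin r hr α hα G r'
    hr' P hP
end
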